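/- Let u ∈ L²(ℝ²) with ∫_{ℝ²} log(1+|x|) u(x)² dx < ∞. Suppose δ ≥ 2, β > 0 and ∫_{B_δ(0)} u² dx ≥ β. Then ∬_{ℝ²×ℝ²} log(1+|x-y|) u(x)² u(y)² dx dy ≥ (β/2) ( ∫_{ℝ²} log(1+|y|) u(y)² dy - log(1+2δ) ∫_{ℝ²} u(y)² dy ). -/
import Mathlib


open MeasureTheory

theorem V1_lower_bound (u : EuclideanSpace ℝ (Fin 2) → ℝ)
    (h2 : Integrable (fun x => u x ^ 2))
    (hlog : Integrable (fun x => Real.log (1 + ‖x‖) * u x ^ 2))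
    (δ β : ℝ) (hδ : 2 ≤ δ) (hβ : 0 < β)
    (hmass : β ≤ ∫ x in Metric.ball (0 : EuclideanSpace ℝ (Fin 2)) δ, u x ^ 2) :
    β / 2 * ((∫ y, Real.log (1 + ‖y‖) * u y ^ 2) -
        Real.log (1 + 2 * δ) * ∫ y, u y ^ 2) ≤
      ∫ x, ∫ y, Real.log (1 + ‖x - y‖) * u x ^ 2 * u y ^ 2 := by
  set A := ∫ y, Real.log (1 + ‖y‖) * u y ^ 2 with hA
  set B := ∫ y, u y ^ 2 with hB
  set L := Real.log (1 + 2 * δ) with hLdef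
  have hu : AEStronglyMeasurable (fun x => u x ^ 2) volume := h2.aestronglyMeasurable
  have hLnn : 0 ≤ L := Real.log_nonneg (by linarith)
  have hcont : ∀ x : EuclideanSpace ℝ (Fin 2),
      Continuous (fun y : EuclideanSpace ℝ (Fin 2) => Real.log (1 + ‖x - y‖)) := by
    intro x
    apply Continuous.log
    · exact continuous_const.add (continuous_const.sub continuous_id).norm
    · intro y; positivity
  have hlogsum : ∀ x y : EuclideanSpace ℝ (Fin 2),
      Real.log (1 + ‖x - y‖) ≤ Real.log (1 + ‖x‖) + Real.log (1 + ‖y‖) := by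
    intro x y
    calc Real.log (1 + ‖x - y‖) ≤ Real.log ((1 + ‖x‖) * (1 + ‖y‖)) := by
          apply Real.log_le_log (by positivity)
          have h := norm_sub_le x y
          nlinarith [norm_nonneg x, norm_nonneg y]
      _ = Real.log (1 + ‖x‖) + Real.log (1 + ‖y‖) :=
          Real.log_mul (by positivity) (by positivity)
  -- inner integrability for every x
  have hinner : ∀ x : EuclideanSpace ℝ (Fin 2),
      Integrable (fun y => Real.log (1 + ‖x - y‖) * u x ^ 2 * u y ^ 2) := by
    intro x
    have hb : Integrable (fun y : EuclideanSpace ℝ (Fin 2) =>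
        (Real.log (1 + ‖x‖) * u x ^ 2) * u y ^ 2
          + u x ^ 2 * (Real.log (1 + ‖y‖) * u y ^ 2)) :=
      (h2.const_mul _).add (hlog.const_mul _)
    apply hb.mono'
    · exact (((hcont x).mul continuous_const).aestronglyMeasurable).mul hu
    · filter_upwards with y
      have h1 : 0 ≤ Real.log (1 + ‖x - y‖) := Real.log_nonneg (by linarith [norm_nonneg (x - y)])
      rw [Real.norm_eq_abs, abs_of_nonneg (by positivity)]
      calc Real.log (1 + ‖x - y‖) * u x ^ 2 * u y ^ 2
          ≤ (Real.log (1 + ‖x‖) + Real.log (1 + ‖y‖)) * u x ^ 2 * u y ^ 2 :=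
            mul_le_mul_of_nonneg_right
              (mul_le_mul_of_nonneg_right (hlogsum x y) (sq_nonneg _)) (sq_nonneg _)
        _ = (Real.log (1 + ‖x‖) * u x ^ 2) * u y ^ 2
              + u x ^ 2 * (Real.log (1 + ‖y‖) * u y ^ 2) := by ring
  -- key pointwise lemma
  have hkey : ∀ x ∈ Metric.ball (0 : EuclideanSpace ℝ (Fin 2)) δ,
      ∀ y : EuclideanSpace ℝ (Fin 2),
      1 / 2 * (Real.log (1 + ‖y‖) - L) ≤ Real.log (1 + ‖x - y‖) := by
    intro x hx y
    have hxn : ‖x‖ < δ := by simpa [Metric.mem_ball, dist_zero_right] using hx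
    have hRnn : 0 ≤ Real.log (1 + ‖x - y‖) := Real.log_nonneg (by linarith [norm_nonneg (x - y)])
    by_cases hy : ‖y‖ ≤ 2 * δ
    · have : Real.log (1 + ‖y‖) ≤ L :=
        Real.log_le_log (by positivity) (by linarith)
      linarith
    · push_neg at hy
      have hs : ‖y‖ - ‖x‖ ≤ ‖x - y‖ := by
        have := norm_sub_norm_le y x
        rwa [norm_sub_rev] at this
      have hsq : 1 + ‖y‖ ≤ (1 + ‖x - y‖) ^ 2 := by
        nlinarith [norm_nonneg (x - y), norm_nonneg y]
      have h1 : Real.log (1 + ‖y‖) ≤ 2 * Real.log (1 + ‖x - y‖) := by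
        have := Real.log_le_log (by positivity) hsq
        rwa [Real.log_pow, Nat.cast_ofNat] at this
      linarith
  -- inner lower bound for x in ball
  have hinnerLB : ∀ x ∈ Metric.ball (0 : EuclideanSpace ℝ (Fin 2)) δ,
      u x ^ 2 * (1 / 2 * (A - L * B)) ≤
        ∫ y, Real.log (1 + ‖x - y‖) * u x ^ 2 * u y ^ 2 := by
    intro x hx
    have hlb : Integrable (fun y : EuclideanSpace ℝ (Fin 2) =>
        (u x ^ 2 / 2) * (Real.log (1 + ‖y‖) * u y ^ 2) - (L * u x ^ 2 / 2) * u y ^ 2) :=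
      (hlog.const_mul _).sub (h2.const_mul _)
    have hmono : ∀ y : EuclideanSpace ℝ (Fin 2),
        (u x ^ 2 / 2) * (Real.log (1 + ‖y‖) * u y ^ 2) - (L * u x ^ 2 / 2) * u y ^ 2
          ≤ Real.log (1 + ‖x - y‖) * u x ^ 2 * u y ^ 2 := by
      intro y
      have h := hkey x hx y
      have h' := mul_le_mul_of_nonneg_right
        (mul_le_mul_of_nonneg_right h (sq_nonneg (u x))) (sq_nonneg (u y))
      calc (u x ^ 2 / 2) * (Real.log (1 + ‖y‖) * u y ^ 2) - (L * u x ^ 2 / 2) * u y ^ 2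
          = 1 / 2 * (Real.log (1 + ‖y‖) - L) * u x ^ 2 * u y ^ 2 := by ring
        _ ≤ Real.log (1 + ‖x - y‖) * u x ^ 2 * u y ^ 2 := h'
    have hint := integral_mono hlb (hinner x) hmono
    have hval : ∫ y, ((u x ^ 2 / 2) * (Real.log (1 + ‖y‖) * u y ^ 2)
        - (L * u x ^ 2 / 2) * u y ^ 2) = (u x ^ 2 / 2) * A - (L * u x ^ 2 / 2) * B := by
      rw [integral_sub (hlog.const_mul _) (h2.const_mul _),
        integral_const_mul, integral_const_mul]
    rw [hval] at hint
    calc u x ^ 2 * (1 / 2 * (A - L * B))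
        = (u x ^ 2 / 2) * A - (L * u x ^ 2 / 2) * B := by ring
      _ ≤ _ := hint
  -- product integrability
  have huf : AEStronglyMeasurable
      (fun p : EuclideanSpace ℝ (Fin 2) × EuclideanSpace ℝ (Fin 2) => u p.1 ^ 2)
      (volume.prod volume) :=
    hu.comp_quasiMeasurePreserving Measure.quasiMeasurePreserving_fst
  have hus : AEStronglyMeasurable
      (fun p : EuclideanSpace ℝ (Fin 2) × EuclideanSpace ℝ (Fin 2) => u p.2 ^ 2)
      (volume.prod volume) :=
    hu.comp_quasiMeasurePreserving Measure.quasiMeasurePreserving_snd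
  have hH : Integrable
      (fun p : EuclideanSpace ℝ (Fin 2) × EuclideanSpace ℝ (Fin 2) =>
        Real.log (1 + ‖p.1 - p.2‖) * u p.1 ^ 2 * u p.2 ^ 2) (volume.prod volume) := by
    have hb : Integrable (fun p : EuclideanSpace ℝ (Fin 2) × EuclideanSpace ℝ (Fin 2) =>
        (Real.log (1 + ‖p.1‖) * u p.1 ^ 2) * (u p.2 ^ 2)
          + (u p.1 ^ 2) * (Real.log (1 + ‖p.2‖) * u p.2 ^ 2)) :=
      (hlog.mul_prod h2).add (h2.mul_prod hlog)
    apply hb.mono'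
    · have hc : Continuous (fun p : EuclideanSpace ℝ (Fin 2) × EuclideanSpace ℝ (Fin 2) =>
          Real.log (1 + ‖p.1 - p.2‖)) := by
        apply Continuous.log
        · exact continuous_const.add (continuous_fst.sub continuous_snd).norm
        · intro p; positivity
      exact (hc.aestronglyMeasurable.mul huf).mul hus
    · filter_upwards with p
      have h1 : 0 ≤ Real.log (1 + ‖p.1 - p.2‖) := Real.log_nonneg (by linarith [norm_nonneg (p.1 - p.2)])
      rw [Real.norm_eq_abs, abs_of_nonneg (by positivity)]
      calc Real.log (1 + ‖p.1 - p.2‖) * u p.1 ^ 2 * u p.2 ^ 2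
          ≤ (Real.log (1 + ‖p.1‖) + Real.log (1 + ‖p.2‖)) * u p.1 ^ 2 * u p.2 ^ 2 :=
            mul_le_mul_of_nonneg_right
              (mul_le_mul_of_nonneg_right (hlogsum p.1 p.2) (sq_nonneg _)) (sq_nonneg _)
        _ = (Real.log (1 + ‖p.1‖) * u p.1 ^ 2) * (u p.2 ^ 2)
              + (u p.1 ^ 2) * (Real.log (1 + ‖p.2‖) * u p.2 ^ 2) := by ring
  have hF : Integrable (fun x => ∫ y, Real.log (1 + ‖x - y‖) * u x ^ 2 * u y ^ 2) := by
    have := hH.integral_prod_left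
    simpa using this
  have hFnn : ∀ x, 0 ≤ ∫ y, Real.log (1 + ‖x - y‖) * u x ^ 2 * u y ^ 2 := by
    intro x
    apply integral_nonneg
    intro y
    have h1 : 0 ≤ Real.log (1 + ‖x - y‖) := Real.log_nonneg (by linarith [norm_nonneg (x - y)])
    positivity
  by_cases hcase : A - L * B ≤ 0
  · have hRHS : 0 ≤ ∫ x, ∫ y, Real.log (1 + ‖x - y‖) * u x ^ 2 * u y ^ 2 :=
      integral_nonneg hFnn
    nlinarith
  · push_neg at hcase
    set C := 1 / 2 * (A - L * B) with hC
    have hCpos : 0 < C := by positivity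
    have hball : MeasurableSet (Metric.ball (0 : EuclideanSpace ℝ (Fin 2)) δ) :=
      measurableSet_ball
    have step1 : ∫ x in Metric.ball (0 : EuclideanSpace ℝ (Fin 2)) δ, u x ^ 2 * C ≤
        ∫ x in Metric.ball (0 : EuclideanSpace ℝ (Fin 2)) δ,
          ∫ y, Real.log (1 + ‖x - y‖) * u x ^ 2 * u y ^ 2 := by
      apply setIntegral_mono_on ((h2.mul_const C).integrableOn) hF.integrableOn hball
      intro x hx
      exact hinnerLB x hx
    have step2 : ∫ x in Metric.ball (0 : EuclideanSpace ℝ (Fin 2)) δ, u x ^ 2 * C =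
        (∫ x in Metric.ball (0 : EuclideanSpace ℝ (Fin 2)) δ, u x ^ 2) * C :=
      integral_mul_const _ _
    have step3 : ∫ x in Metric.ball (0 : EuclideanSpace ℝ (Fin 2)) δ,
        ∫ y, Real.log (1 + ‖x - y‖) * u x ^ 2 * u y ^ 2 ≤
        ∫ x, ∫ y, Real.log (1 + ‖x - y‖) * u x ^ 2 * u y ^ 2 :=
      setIntegral_le_integral hF (Filter.Eventually.of_forall hFnn)
    have hm : β ≤ ∫ x in Metric.ball (0 : EuclideanSpace ℝ (Fin 2)) δ, u x ^ 2 := hmass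
    have : β * C ≤ (∫ x in Metric.ball (0 : EuclideanSpace ℝ (Fin 2)) δ, u x ^ 2) * C :=
      mul_le_mul_of_nonneg_right hm hCpos.le
    calc β / 2 * (A - L * B) = β * C := by rw [hC]; ring
      _ ≤ (∫ x in Metric.ball (0 : EuclideanSpace ℝ (Fin 2)) δ, u x ^ 2) * C := this
      _ = ∫ x in Metric.ball (0 : EuclideanSpace ℝ (Fin 2)) δ, u x ^ 2 * C := step2.symm
      _ ≤ _ := le_trans step1 step3
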